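/- arXiv:1812.02584 — 3 statements merged into one kernel-verified Lean document; each statement's English description precedes it below -/
import Mathlib

section
/- Wick bracket formula: Let a_1, b_1, a_2, b_2 be elements of a space C with symmetric bilinear form ⟨·,·⟩, with associated fermionic fields acting on the Fock space V (generated from the Clifford relations {a(m), b(n)} = ⟨a,b⟩ δ_{m,−n}). Then [:a_1(z) b_1(z):, :a_2(w) b_2(w):] = ⟨a_1,b_2⟩ :b_1(w)a_2(w): δ(z−w) − ⟨a_1,a_2⟩ :b_1(w)b_2(w): δ(z−w) + ⟨b_1,a_2⟩ :a_1(w)b_2(w): δ(z−w) − ⟨b_1,b_2⟩ :a_1(w)a_2(w): δ(z−w) + (⟨a_1,b_2⟩⟨b_1,a_2⟩ − ⟨a_1,a_2⟩⟨b_1,b_2⟩) ∂_w δ(z−w). -/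
/-!
STATEMENT 14 (Wick bracket formula, Proposition 3.3 of the paper): for fermionic
fields a(z) = Σ_{m ∈ ℤ+1/2} a(m) z^{−m−1/2} acting on a space V and satisfying the
Clifford relations {a(m), b(n)} = ⟨a,b⟩ δ_{m,−n}, with normal ordering
:a(m)b(n): = a(m)b(n) for m < 0 and −b(n)a(m) for m > 0, the normally ordered
quadratic fields :a_1(z)b_1(z):, :a_2(w)b_2(w): (whose m-th components are
Σ_{k ∈ ℤ+1/2} :a(k) b(m−k):, a finite sum on each vector) satisfy, coefficientwise,
[:a_1(z)b_1(z):, :a_2(w)b_2(w):] =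
  ⟨a_1,b_2⟩ :b_1(w)a_2(w): δ(z−w) − ⟨a_1,a_2⟩ :b_1(w)b_2(w): δ(z−w)
  + ⟨b_1,a_2⟩ :a_1(w)b_2(w): δ(z−w) − ⟨b_1,b_2⟩ :a_1(w)a_2(w): δ(z−w)
  + (⟨a_1,b_2⟩⟨b_1,a_2⟩ − ⟨a_1,a_2⟩⟨b_1,b_2⟩) ∂_w δ(z−w).
Coefficientwise (z^{−m−1} w^{−n−1}): F(w)δ(z−w) contributes F_{m+n}, and
∂_w δ(z−w) contributes m δ_{m,−n}.
-/

/-- half-integers, k ∈ ℤ + 1/2 -/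
def HalfInt (q : ℚ) : Prop := ∃ m : ℤ, q = m + 1 / 2

/-- the half-integer attached to an integer -/
def hxq (j : ℤ) : ℚ := (j : ℚ) + 1 / 2

lemma hxq_def (j : ℤ) : hxq j = (j : ℚ) + 1 / 2 := rfl

lemma hxq_neg {j : ℤ} (h : j < 0) : hxq j < 0 := by
  have h1 : (j : ℚ) ≤ -1 := by exact_mod_cast (by omega : j ≤ -1)
  rw [hxq_def]; linarith

lemma hxq_nonneg {j : ℤ} (h : 0 ≤ j) : ¬ hxq j < 0 := by
  have h1 : (0 : ℚ) ≤ (j : ℚ) := by exact_mod_cast h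
  rw [hxq_def]; push_neg; linarith

lemma hxq_eq_neg (j j' : ℤ) : hxq j = -(hxq j') ↔ j + j' = -1 := by
  rw [hxq_def, hxq_def]
  constructor
  · intro h
    have h2 : ((j + j' : ℤ) : ℚ) = ((-1 : ℤ) : ℚ) := by push_cast; linarith
    exact_mod_cast h2
  · intro h
    have h2 : ((j + j' : ℤ) : ℚ) = ((-1 : ℤ) : ℚ) := by exact_mod_cast h
    push_cast at h2; linarith

theorem stmt14 (C V : Type*) [AddCommGroup V] [Module ℂ V]
    (B : C → C → ℂ) (φ : C → ℚ → Module.End ℂ V)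
    -- Clifford relations {x(k), y(l)} = ⟨x,y⟩ δ_{k,−l}
    (hCl : ∀ (x y : C) (k l : ℚ), HalfInt k → HalfInt l →
      φ x k * φ y l + φ y l * φ x k = (if k = -l then B x y else 0) • (1 : Module.End ℂ V))
    -- normal ordering of components
    (NO : C → C → ℚ → ℚ → Module.End ℂ V)
    (hNO : ∀ a b k l, NO a b k l = if k < 0 then φ a k * φ b l else -(φ b l * φ a k))
    -- components of the normally ordered quadratic field :a(z)b(z):
    (Nc : C → C → ℤ → V → V)
    (hNc : ∀ a b m v, Nc a b m v = ∑ᶠ j : ℤ, (NO a b ((j : ℚ) + 1 / 2) ((m : ℚ) - ((j : ℚ) + 1 / 2))) v)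
    (hFin : ∀ (a b : C) (m : ℤ) (v : V),
      (Function.support fun j : ℤ =>
        (NO a b ((j : ℚ) + 1 / 2) ((m : ℚ) - ((j : ℚ) + 1 / 2))) v).Finite) :
    ∀ (a₁ b₁ a₂ b₂ : C) (m n : ℤ) (v : V),
      Nc a₁ b₁ m (Nc a₂ b₂ n v) - Nc a₂ b₂ n (Nc a₁ b₁ m v) =
        B a₁ b₂ • Nc b₁ a₂ (m + n) v - B a₁ a₂ • Nc b₁ b₂ (m + n) v
          + B b₁ a₂ • Nc a₁ b₂ (m + n) v - B b₁ b₂ • Nc a₁ a₂ (m + n) v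
          + ((if m = -n then (m : ℂ) else 0) * (B a₁ b₂ * B b₁ a₂ - B a₁ a₂ * B b₁ b₂)) • v := by
  classical
  -- B is symmetric in its action on V
  have hBsym : ∀ (x y : C) (w : V), B x y • w = B y x • w := by
    intro x y w
    have h1 := hCl x y (1/2) (-(1/2)) ⟨0, by norm_num⟩ ⟨-1, by push_cast; norm_num⟩
    have h2 := hCl y x (-(1/2)) (1/2) ⟨-1, by push_cast; norm_num⟩ ⟨0, by norm_num⟩
    rw [if_pos (by norm_num)] at h1
    rw [if_pos (by norm_num)] at h2
    have h3 : (B x y) • (1 : Module.End ℂ V) = (B y x) • (1 : Module.End ℂ V) := by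
      rw [← h1, ← h2]; exact add_comm _ _
    have h4 := congrArg (fun T : Module.End ℂ V => T w) h3
    simpa using h4
  have hH : ∀ j : ℤ, HalfInt (hxq j) := fun j => ⟨j, rfl⟩
  -- reformulate Nc and hFin with integer-indexed half-integers
  have hNc' : ∀ (a b : C) (mm : ℤ) (w : V),
      Nc a b mm w = ∑ᶠ j : ℤ, NO a b (hxq j) (hxq (mm - 1 - j)) w := by
    intro a b mm w
    rw [hNc]
    exact finsum_congr fun j => by
      rw [show hxq (mm - 1 - j) = (mm : ℚ) - ((j : ℚ) + 1/2) by rw [hxq_def]; push_cast; ring]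
      rfl
  have hFin' : ∀ (a b : C) (mm : ℤ) (w : V),
      (Function.support fun j : ℤ => NO a b (hxq j) (hxq (mm - 1 - j)) w).Finite := by
    intro a b mm w
    have he : (fun j : ℤ => NO a b (hxq j) (hxq (mm - 1 - j)) w)
        = fun j : ℤ => NO a b ((j : ℚ) + 1/2) ((mm : ℚ) - ((j : ℚ) + 1/2)) w := by
      funext j
      rw [show hxq (mm - 1 - j) = (mm : ℚ) - ((j : ℚ) + 1/2) by rw [hxq_def]; push_cast; ring]
      rfl
    rw [he]; exact hFin a b mm w
  -- product of two mode operators in terms of normal ordering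
  have hPB : ∀ (x y : C) (j j' : ℤ) (w : V),
      φ x (hxq j) (φ y (hxq j') w)
        = NO x y (hxq j) (hxq j') w + (if j + j' = -1 ∧ 0 ≤ j then B x y else 0) • w := by
    intro x y j j' w
    rcases lt_or_ge j 0 with hj | hj
    · rw [hNO, if_pos (hxq_neg hj), if_neg (by omega : ¬(j + j' = -1 ∧ 0 ≤ j))]
      simp [Module.End.mul_apply]
    · have hcl := congrArg (fun T : Module.End ℂ V => T w)
        (hCl x y (hxq j) (hxq j') (hH j) (hH j'))
      simp only [LinearMap.add_apply, Module.End.mul_apply, LinearMap.smul_apply,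
        Module.End.one_apply] at hcl
      rw [hNO, if_neg (hxq_nonneg hj)]
      simp only [LinearMap.neg_apply, Module.End.mul_apply]
      have hcond : (if j + j' = -1 ∧ 0 ≤ j then B x y else 0)
          = (if hxq j = -(hxq j') then B x y else 0) := by
        refine if_congr ?_ rfl rfl
        rw [hxq_eq_neg]; exact ⟨fun h => h.1, fun h => ⟨h, hj⟩⟩
      rw [hcond, ← hcl]
      abel
  -- normal ordering is antisymmetric
  have hSwap : ∀ (x y : C) (j j' : ℤ) (w : V),
      NO x y (hxq j) (hxq j') w = -(NO y x (hxq j') (hxq j) w) := by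
    intro x y j j' w
    have hcl := congrArg (fun T : Module.End ℂ V => T w)
      (hCl x y (hxq j) (hxq j') (hH j) (hH j'))
    simp only [LinearMap.add_apply, Module.End.mul_apply, LinearMap.smul_apply,
      Module.End.one_apply] at hcl
    rw [hPB x y j j' w, hPB y x j' j w] at hcl
    by_cases hc : j + j' = -1
    · rw [if_pos ((hxq_eq_neg j j').mpr hc)] at hcl
      refine eq_neg_of_add_eq_zero_left ?_
      rcases lt_or_ge j 0 with hj | hj
      · rw [if_neg (by omega : ¬(j + j' = -1 ∧ 0 ≤ j)),
          if_pos (⟨by omega, by omega⟩ : j' + j = -1 ∧ 0 ≤ j'), zero_smul, add_zero,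
          hBsym y x w] at hcl
        calc NO x y (hxq j) (hxq j') w + NO y x (hxq j') (hxq j) w
            = (NO x y (hxq j) (hxq j') w + (NO y x (hxq j') (hxq j) w + B x y • w))
              - B x y • w := by abel
          _ = 0 := by rw [hcl]; abel
      · rw [if_pos (⟨hc, hj⟩ : j + j' = -1 ∧ 0 ≤ j),
          if_neg (by omega : ¬(j' + j = -1 ∧ 0 ≤ j')), zero_smul, add_zero] at hcl
        calc NO x y (hxq j) (hxq j') w + NO y x (hxq j') (hxq j) w
            = (NO x y (hxq j) (hxq j') w + B x y • w + NO y x (hxq j') (hxq j) w)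
              - B x y • w := by abel
          _ = 0 := by rw [hcl]; abel
    · rw [if_neg (fun h => hc ((hxq_eq_neg j j').mp h)),
        if_neg (by omega : ¬(j + j' = -1 ∧ 0 ≤ j)),
        if_neg (by omega : ¬(j' + j = -1 ∧ 0 ≤ j')), zero_smul, add_zero, add_zero] at hcl
      exact eq_neg_of_add_eq_zero_left hcl
  -- reversed product formula
  have hPB' : ∀ (x y : C) (j j' : ℤ) (w : V),
      φ x (hxq j) (φ y (hxq j') w)
        = -(NO y x (hxq j') (hxq j) w) + (if j + j' = -1 ∧ j' ≤ -1 then B y x else 0) • w := by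
    intro x y j j' w
    rw [hPB x y j j' w, hSwap x y j j' w]
    congr 1
    have hiff : (j + j' = -1 ∧ 0 ≤ j) ↔ (j + j' = -1 ∧ j' ≤ -1) := by omega
    by_cases h : j + j' = -1 ∧ j' ≤ -1
    · rw [if_pos h, if_pos (hiff.mpr h)]; exact hBsym x y w
    · rw [if_neg h, if_neg (fun hh => h (hiff.mp hh))]
  -- Nc is linear
  have hNcL : ∀ (a b : C) (mm : ℤ), ∃ L : V →ₗ[ℂ] V, ∀ w, Nc a b mm w = L w := by
    intro a b mm
    refine ⟨{ toFun := fun w => Nc a b mm w, map_add' := ?_, map_smul' := ?_ }, fun w => rfl⟩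
    · intro u w
      show Nc a b mm (u + w) = Nc a b mm u + Nc a b mm w
      rw [hNc a b mm u, hNc a b mm w, hNc a b mm (u + w),
        ← finsum_add_distrib (hFin a b mm u) (hFin a b mm w)]
      exact finsum_congr fun j => map_add _ _ _
    · intro c u
      show Nc a b mm (c • u) = (RingHom.id ℂ) c • Nc a b mm u
      rw [RingHom.id_apply, hNc a b mm u, hNc a b mm (c • u),
        smul_finsum' c (hFin a b mm u)]
      exact finsum_congr fun j => map_smul _ _ _
  -- commutator of Nc with a single mode operator
  have hCphi : ∀ (x y c : C) (mm p : ℤ) (w : V),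
      Nc x y mm (φ c (hxq p) w) - φ c (hxq p) (Nc x y mm w)
        = B y c • φ x (hxq (mm + p)) w - B x c • φ y (hxq (mm + p)) w := by
    intro x y c mm p w
    have key : ∀ j : ℤ,
        NO x y (hxq j) (hxq (mm - 1 - j)) (φ c (hxq p) w)
            - φ c (hxq p) (NO x y (hxq j) (hxq (mm - 1 - j)) w)
          = (if j = mm + p then B y c • φ x (hxq j) w else 0)
            - (if j = -p - 1 then B x c • φ y (hxq (mm - 1 - j)) w else 0) := by
      intro j
      have a1 := congrArg (fun T : Module.End ℂ V => T w)
        (hCl y c (hxq (mm - 1 - j)) (hxq p) (hH _) (hH _))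
      have a2 := congrArg (fun T : Module.End ℂ V => T (φ y (hxq (mm - 1 - j)) w))
        (hCl x c (hxq j) (hxq p) (hH _) (hH _))
      simp only [LinearMap.add_apply, Module.End.mul_apply, LinearMap.smul_apply,
        Module.End.one_apply] at a1 a2
      have a1' := eq_sub_of_add_eq a1
      have a2' := eq_sub_of_add_eq a2
      have e1' := sub_eq_of_eq_add (hPB x y j (mm - 1 - j) (φ c (hxq p) w))
      have e2' := sub_eq_of_eq_add (hPB x y j (mm - 1 - j) w)
      rw [← e1', ← e2']
      simp only [map_sub, map_smul]
      rw [a1']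
      simp only [map_sub, map_smul]
      rw [a2']
      have hs1 : (if hxq (mm - 1 - j) = -(hxq p) then B y c else 0) • φ x (hxq j) w
          = (if j = mm + p then B y c • φ x (hxq j) w else 0) := by
        by_cases h : j = mm + p
        · rw [if_pos ((hxq_eq_neg _ _).mpr (by omega)), if_pos h]
        · rw [if_neg (fun hh => h (by have := (hxq_eq_neg _ _).mp hh; omega)), if_neg h,
            zero_smul]
      have hs2 : (if hxq j = -(hxq p) then B x c else 0) • φ y (hxq (mm - 1 - j)) w
          = (if j = -p - 1 then B x c • φ y (hxq (mm - 1 - j)) w else 0) := by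
        by_cases h : j = -p - 1
        · rw [if_pos ((hxq_eq_neg _ _).mpr (by omega)), if_pos h]
        · rw [if_neg (fun hh => h (by have := (hxq_eq_neg _ _).mp hh; omega)), if_neg h,
            zero_smul]
      rw [← hs1, ← hs2]
      abel
    have fin1 := hFin' x y mm (φ c (hxq p) w)
    have fin2 : (Function.support fun j : ℤ =>
        φ c (hxq p) (NO x y (hxq j) (hxq (mm - 1 - j)) w)).Finite := by
      apply (hFin' x y mm w).subset
      intro j hj
      simp only [Function.mem_support] at hj ⊢
      intro h0; exact hj (by rw [h0, map_zero])
    have ezz : φ c (hxq p) (∑ᶠ j : ℤ, NO x y (hxq j) (hxq (mm - 1 - j)) w)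
        = ∑ᶠ j : ℤ, φ c (hxq p) (NO x y (hxq j) (hxq (mm - 1 - j)) w) :=
      (φ c (hxq p)).toAddMonoidHom.map_finsum (hFin' x y mm w)
    rw [hNc' x y mm (φ c (hxq p) w), hNc' x y mm w, ezz,
      ← finsum_sub_distrib fin1 fin2, finsum_congr key]
    have g1fin : (Function.support fun j : ℤ =>
        (if j = mm + p then B y c • φ x (hxq j) w else 0)).Finite := by
      apply Set.Finite.subset (Set.finite_singleton (mm + p))
      intro j hj
      simp only [Function.mem_support] at hj
      rcases eq_or_ne j (mm + p) with h | h
      · exact h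
      · exact absurd (if_neg h) hj
    have g2fin : (Function.support fun j : ℤ =>
        (if j = -p - 1 then B x c • φ y (hxq (mm - 1 - j)) w else 0)).Finite := by
      apply Set.Finite.subset (Set.finite_singleton (-p - 1))
      intro j hj
      simp only [Function.mem_support] at hj
      rcases eq_or_ne j (-p - 1) with h | h
      · exact h
      · exact absurd (if_neg h) hj
    rw [finsum_sub_distrib g1fin g2fin,
      finsum_eq_single _ (mm + p) (fun j hj => if_neg hj),
      finsum_eq_single _ (-p - 1) (fun j hj => if_neg hj),
      if_pos rfl, if_pos rfl, show mm - 1 - (-p - 1) = mm + p from by omega]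
  -- main computation
  intro a₁ b₁ a₂ b₂ m n v
  obtain ⟨L₁, hL₁⟩ := hNcL a₁ b₁ m
  -- the commutator with a single normally ordered quadratic component
  have key2 : ∀ j : ℤ,
      Nc a₁ b₁ m (NO a₂ b₂ (hxq j) (hxq (n - 1 - j)) v)
          - NO a₂ b₂ (hxq j) (hxq (n - 1 - j)) (Nc a₁ b₁ m v)
        = B b₁ a₂ • NO a₁ b₂ (hxq (m + j)) (hxq (n - 1 - j)) v
          - B a₁ a₂ • NO b₁ b₂ (hxq (m + j)) (hxq (n - 1 - j)) v
          - B b₁ b₂ • NO a₁ a₂ (hxq (m + n - 1 - j)) (hxq j) v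
          + B a₁ b₂ • NO b₁ a₂ (hxq (m + n - 1 - j)) (hxq j) v
          + ((if m + n = 0 then
                ((if 0 ≤ m + j then (1:ℂ) else 0) - (if 0 ≤ j then (1:ℂ) else 0)) else 0)
              * (B a₁ b₂ * B b₁ a₂ - B a₁ a₂ * B b₁ b₂)) • v := by
    intro j
    rcases lt_or_ge j 0 with hj | hj
    · -- j < 0 : NO a₂ b₂ is the straight product
      have h2 := hCphi a₁ b₁ b₂ m (n - 1 - j) v
      rw [show m + (n - 1 - j) = m + n - 1 - j from by omega] at h2
      have h1j := hCphi a₁ b₁ a₂ m j ((φ b₂ (hxq (n - 1 - j))) v)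
      rw [hNO a₂ b₂, if_pos (hxq_neg hj)]
      simp only [Module.End.mul_apply]
      have h1' := sub_eq_iff_eq_add.mp h1j
      have h2' := sub_eq_iff_eq_add.mp h2
      rw [h1', h2']
      simp only [map_add, map_sub, map_smul]
      rw [hPB a₁ b₂ (m + j) (n - 1 - j) v, hPB b₁ b₂ (m + j) (n - 1 - j) v,
        hPB a₂ a₁ j (m + n - 1 - j) v, hPB a₂ b₁ j (m + n - 1 - j) v,
        hSwap a₂ a₁ j (m + n - 1 - j) v, hSwap a₂ b₁ j (m + n - 1 - j) v]
      by_cases hM : m + n = 0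
      · by_cases hmj : 0 ≤ m + j
        · simp only [if_pos (show (m + j) + (n - 1 - j) = -1 ∧ 0 ≤ m + j from ⟨by omega, hmj⟩),
            if_neg (show ¬(j + (m + n - 1 - j) = -1 ∧ 0 ≤ j) from by omega),
            if_pos hM, if_pos hmj, if_neg (show ¬(0:ℤ) ≤ j from by omega)]
          module
        · simp only [if_neg (show ¬((m + j) + (n - 1 - j) = -1 ∧ 0 ≤ m + j) from by omega),
            if_neg (show ¬(j + (m + n - 1 - j) = -1 ∧ 0 ≤ j) from by omega),
            if_pos hM, if_neg hmj, if_neg (show ¬(0:ℤ) ≤ j from by omega)]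
          module
      · simp only [if_neg (show ¬((m + j) + (n - 1 - j) = -1 ∧ 0 ≤ m + j) from by omega),
          if_neg (show ¬(j + (m + n - 1 - j) = -1 ∧ 0 ≤ j) from by omega), if_neg hM]
        module
    · -- 0 ≤ j : NO a₂ b₂ is minus the reversed product
      have h1b := hCphi a₁ b₁ b₂ m (n - 1 - j) (φ a₂ (hxq j) v)
      rw [show m + (n - 1 - j) = m + n - 1 - j from by omega] at h1b
      have h2b := hCphi a₁ b₁ a₂ m j v
      have h1b' := sub_eq_iff_eq_add.mp h1b
      have h2b' := sub_eq_iff_eq_add.mp h2b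
      have hnegNc : ∀ u : V, Nc a₁ b₁ m (-u) = -(Nc a₁ b₁ m u) := fun u => by
        rw [hL₁, hL₁, map_neg]
      rw [hNO a₂ b₂, if_neg (hxq_nonneg hj)]
      simp only [LinearMap.neg_apply, Module.End.mul_apply]
      rw [hnegNc, h1b', h2b']
      simp only [map_add, map_sub, map_smul]
      rw [hPB a₁ a₂ (m + n - 1 - j) j v, hPB b₁ a₂ (m + n - 1 - j) j v,
        hPB' b₂ a₁ (n - 1 - j) (m + j) v, hPB' b₂ b₁ (n - 1 - j) (m + j) v]
      by_cases hM : m + n = 0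
      · by_cases hmj : 0 ≤ m + j
        · simp only [if_neg (show ¬((m + n - 1 - j) + j = -1 ∧ 0 ≤ m + n - 1 - j) from by omega),
            if_neg (show ¬((n - 1 - j) + (m + j) = -1 ∧ m + j ≤ -1) from by omega),
            if_pos hM, if_pos hmj, if_pos hj]
          module
        · simp only [if_neg (show ¬((m + n - 1 - j) + j = -1 ∧ 0 ≤ m + n - 1 - j) from by omega),
            if_pos (show (n - 1 - j) + (m + j) = -1 ∧ m + j ≤ -1 from ⟨by omega, by omega⟩),
            if_pos hM, if_neg hmj, if_pos hj]
          module
      · simp only [if_neg (show ¬((m + n - 1 - j) + j = -1 ∧ 0 ≤ m + n - 1 - j) from by omega),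
          if_neg (show ¬((n - 1 - j) + (m + j) = -1 ∧ m + j ≤ -1) from by omega), if_neg hM]
        module
  -- finiteness facts
  have finsmul : ∀ (c : ℂ) (f : ℤ → V), (Function.support f).Finite →
      (Function.support fun j => c • f j).Finite := by
    intro c f hf
    apply hf.subset; intro j hj
    simp only [Function.mem_support] at hj ⊢
    intro h0; exact hj (by rw [h0, smul_zero])
  have finsub : ∀ (f g : ℤ → V), (Function.support f).Finite → (Function.support g).Finite →
      (Function.support fun j => f j - g j).Finite := by
    intro f g hf hg
    apply (hf.union hg).subset; intro j hj
    simp only [Function.mem_support, Set.mem_union] at hj ⊢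
    by_contra hcc; push_neg at hcc
    exact hj (by rw [hcc.1, hcc.2, sub_zero])
  have finadd : ∀ (f g : ℤ → V), (Function.support f).Finite → (Function.support g).Finite →
      (Function.support fun j => f j + g j).Finite := by
    intro f g hf hg
    apply (hf.union hg).subset; intro j hj
    simp only [Function.mem_support, Set.mem_union] at hj ⊢
    by_contra hcc; push_neg at hcc
    exact hj (by rw [hcc.1, hcc.2, add_zero])
  have finNO : ∀ (x y : C),
      (Function.support fun j : ℤ => NO x y (hxq (m + j)) (hxq (n - 1 - j)) v).Finite := by
    intro x y
    have h0 := hFin' x y (m + n) v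
    have he : (fun j : ℤ => NO x y (hxq (m + j)) (hxq (n - 1 - j)) v)
        = (fun i : ℤ => NO x y (hxq i) (hxq (m + n - 1 - i)) v) ∘ (fun j : ℤ => m + j) := by
      funext j; simp only [Function.comp_apply]
      rw [show m + n - 1 - (m + j) = n - 1 - j from by omega]
    rw [he, Function.support_comp_eq_preimage]
    exact h0.preimage (fun a _ b _ hab => by omega)
  have finNO2 : ∀ (x y : C),
      (Function.support fun j : ℤ => NO x y (hxq (m + n - 1 - j)) (hxq j) v).Finite := by
    intro x y
    have h0 := hFin' x y (m + n) v
    have he : (fun j : ℤ => NO x y (hxq (m + n - 1 - j)) (hxq j) v)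
        = (fun i : ℤ => NO x y (hxq i) (hxq (m + n - 1 - i)) v) ∘ (fun j : ℤ => m + n - 1 - j) := by
      funext j; simp only [Function.comp_apply]
      rw [show m + n - 1 - (m + n - 1 - j) = j from by omega]
    rw [he, Function.support_comp_eq_preimage]
    exact h0.preimage (fun a _ b _ hab => by omega)
  have hsupp5 : (Function.support fun j : ℤ =>
      ((if m + n = 0 then
          ((if 0 ≤ m + j then (1:ℂ) else 0) - (if 0 ≤ j then (1:ℂ) else 0)) else 0)
        * (B a₁ b₂ * B b₁ a₂ - B a₁ a₂ * B b₁ b₂)) • v)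
      ⊆ ↑(Finset.Icc (-(m.natAbs : ℤ) - 1) ((m.natAbs : ℤ) + 1)) := by
    intro j hj
    simp only [Function.mem_support] at hj
    simp only [Finset.coe_Icc, Set.mem_Icc]
    by_contra hout
    apply hj
    have h1 : (if 0 ≤ m + j then (1:ℂ) else 0) = (if 0 ≤ j then (1:ℂ) else 0) := by
      by_cases h0 : 0 ≤ j
      · rw [if_pos h0, if_pos (by omega)]
      · rw [if_neg h0, if_neg (by omega)]
    rw [h1, sub_self, ite_self, zero_mul, zero_smul]
  have fin5 : (Function.support fun j : ℤ =>
      ((if m + n = 0 then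
          ((if 0 ≤ m + j then (1:ℂ) else 0) - (if 0 ≤ j then (1:ℂ) else 0)) else 0)
        * (B a₁ b₂ * B b₁ a₂ - B a₁ a₂ * B b₁ b₂)) • v).Finite :=
    Set.Finite.subset (Finset.finite_toSet _) hsupp5
  have F1 := finsmul (B b₁ a₂) _ (finNO a₁ b₂)
  have F2 := finsmul (B a₁ a₂) _ (finNO b₁ b₂)
  have F3 := finsmul (B b₁ b₂) _ (finNO2 a₁ a₂)
  have F4 := finsmul (B a₁ b₂) _ (finNO2 b₁ a₂)
  -- assemble
  have step1 : Nc a₁ b₁ m (Nc a₂ b₂ n v) - Nc a₂ b₂ n (Nc a₁ b₁ m v)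
      = ∑ᶠ j : ℤ, (Nc a₁ b₁ m (NO a₂ b₂ (hxq j) (hxq (n - 1 - j)) v)
          - NO a₂ b₂ (hxq j) (hxq (n - 1 - j)) (Nc a₁ b₁ m v)) := by
    have fin1 : (Function.support fun j : ℤ =>
        Nc a₁ b₁ m (NO a₂ b₂ (hxq j) (hxq (n - 1 - j)) v)).Finite := by
      apply (hFin' a₂ b₂ n v).subset
      intro j hj
      simp only [Function.mem_support] at hj ⊢
      intro h0; exact hj (by rw [h0, hL₁, map_zero])
    have fin2 := hFin' a₂ b₂ n (Nc a₁ b₁ m v)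
    have e1 : Nc a₁ b₁ m (Nc a₂ b₂ n v)
        = ∑ᶠ j : ℤ, Nc a₁ b₁ m (NO a₂ b₂ (hxq j) (hxq (n - 1 - j)) v) := by
      rw [hNc' a₂ b₂ n v]
      simp only [hL₁]
      exact L₁.toAddMonoidHom.map_finsum (hFin' a₂ b₂ n v)
    rw [e1, hNc' a₂ b₂ n (Nc a₁ b₁ m v), ← finsum_sub_distrib fin1 fin2]
  calc Nc a₁ b₁ m (Nc a₂ b₂ n v) - Nc a₂ b₂ n (Nc a₁ b₁ m v)
      = ∑ᶠ j : ℤ, (Nc a₁ b₁ m (NO a₂ b₂ (hxq j) (hxq (n - 1 - j)) v)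
          - NO a₂ b₂ (hxq j) (hxq (n - 1 - j)) (Nc a₁ b₁ m v)) := step1
    _ = ∑ᶠ j : ℤ, (B b₁ a₂ • NO a₁ b₂ (hxq (m + j)) (hxq (n - 1 - j)) v
          - B a₁ a₂ • NO b₁ b₂ (hxq (m + j)) (hxq (n - 1 - j)) v
          - B b₁ b₂ • NO a₁ a₂ (hxq (m + n - 1 - j)) (hxq j) v
          + B a₁ b₂ • NO b₁ a₂ (hxq (m + n - 1 - j)) (hxq j) v
          + ((if m + n = 0 then
                ((if 0 ≤ m + j then (1:ℂ) else 0) - (if 0 ≤ j then (1:ℂ) else 0)) else 0)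
              * (B a₁ b₂ * B b₁ a₂ - B a₁ a₂ * B b₁ b₂)) • v) := finsum_congr key2
    _ = (∑ᶠ j : ℤ, B b₁ a₂ • NO a₁ b₂ (hxq (m + j)) (hxq (n - 1 - j)) v)
          - (∑ᶠ j : ℤ, B a₁ a₂ • NO b₁ b₂ (hxq (m + j)) (hxq (n - 1 - j)) v)
          - (∑ᶠ j : ℤ, B b₁ b₂ • NO a₁ a₂ (hxq (m + n - 1 - j)) (hxq j) v)
          + (∑ᶠ j : ℤ, B a₁ b₂ • NO b₁ a₂ (hxq (m + n - 1 - j)) (hxq j) v)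
          + (∑ᶠ j : ℤ, ((if m + n = 0 then
                ((if 0 ≤ m + j then (1:ℂ) else 0) - (if 0 ≤ j then (1:ℂ) else 0)) else 0)
              * (B a₁ b₂ * B b₁ a₂ - B a₁ a₂ * B b₁ b₂)) • v) := by
        rw [finsum_add_distrib (finadd _ _ (finsub _ _ (finsub _ _ F1 F2) F3) F4) fin5,
          finsum_add_distrib (finsub _ _ (finsub _ _ F1 F2) F3) F4,
          finsum_sub_distrib (finsub _ _ F1 F2) F3,
          finsum_sub_distrib F1 F2]
    _ = B b₁ a₂ • Nc a₁ b₂ (m + n) v - B a₁ a₂ • Nc b₁ b₂ (m + n) v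
          - B b₁ b₂ • Nc a₁ a₂ (m + n) v + B a₁ b₂ • Nc b₁ a₂ (m + n) v
          + ((if m = -n then (m : ℂ) else 0)
              * (B a₁ b₂ * B b₁ a₂ - B a₁ a₂ * B b₁ b₂)) • v := by
        have hT1 : (∑ᶠ j : ℤ, B b₁ a₂ • NO a₁ b₂ (hxq (m + j)) (hxq (n - 1 - j)) v)
            = B b₁ a₂ • Nc a₁ b₂ (m + n) v := by
          rw [← smul_finsum' (B b₁ a₂) (finNO a₁ b₂), hNc' a₁ b₂ (m + n) v]
          congr 1
          exact finsum_eq_of_bijective (fun j : ℤ => m + j)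
            ⟨fun a b h => by have h2 : m + a = m + b := h; omega,
              fun i => ⟨i - m, by show m + (i - m) = i; omega⟩⟩
            (fun j => by rw [show m + n - 1 - (m + j) = n - 1 - j from by omega])
        have hT2 : (∑ᶠ j : ℤ, B a₁ a₂ • NO b₁ b₂ (hxq (m + j)) (hxq (n - 1 - j)) v)
            = B a₁ a₂ • Nc b₁ b₂ (m + n) v := by
          rw [← smul_finsum' (B a₁ a₂) (finNO b₁ b₂), hNc' b₁ b₂ (m + n) v]
          congr 1
          exact finsum_eq_of_bijective (fun j : ℤ => m + j)
            ⟨fun a b h => by have h2 : m + a = m + b := h; omega,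
              fun i => ⟨i - m, by show m + (i - m) = i; omega⟩⟩
            (fun j => by rw [show m + n - 1 - (m + j) = n - 1 - j from by omega])
        have hT3 : (∑ᶠ j : ℤ, B b₁ b₂ • NO a₁ a₂ (hxq (m + n - 1 - j)) (hxq j) v)
            = B b₁ b₂ • Nc a₁ a₂ (m + n) v := by
          rw [← smul_finsum' (B b₁ b₂) (finNO2 a₁ a₂), hNc' a₁ a₂ (m + n) v]
          congr 1
          exact finsum_eq_of_bijective (fun j : ℤ => m + n - 1 - j)
            ⟨fun a b h => by have h2 : m + n - 1 - a = m + n - 1 - b := h; omega,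
              fun i => ⟨m + n - 1 - i, by show m + n - 1 - (m + n - 1 - i) = i; omega⟩⟩
            (fun j => by rw [show m + n - 1 - (m + n - 1 - j) = j from by omega])
        have hT4 : (∑ᶠ j : ℤ, B a₁ b₂ • NO b₁ a₂ (hxq (m + n - 1 - j)) (hxq j) v)
            = B a₁ b₂ • Nc b₁ a₂ (m + n) v := by
          rw [← smul_finsum' (B a₁ b₂) (finNO2 b₁ a₂), hNc' b₁ a₂ (m + n) v]
          congr 1
          exact finsum_eq_of_bijective (fun j : ℤ => m + n - 1 - j)
            ⟨fun a b h => by have h2 : m + n - 1 - a = m + n - 1 - b := h; omega,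
              fun i => ⟨m + n - 1 - i, by show m + n - 1 - (m + n - 1 - i) = i; omega⟩⟩
            (fun j => by rw [show m + n - 1 - (m + n - 1 - j) = j from by omega])
        have hT5 : (∑ᶠ j : ℤ, ((if m + n = 0 then
                ((if 0 ≤ m + j then (1:ℂ) else 0) - (if 0 ≤ j then (1:ℂ) else 0)) else 0)
              * (B a₁ b₂ * B b₁ a₂ - B a₁ a₂ * B b₁ b₂)) • v)
            = ((if m = -n then (m : ℂ) else 0)
                * (B a₁ b₂ * B b₁ a₂ - B a₁ a₂ * B b₁ b₂)) • v := by
          by_cases hM : m + n = 0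
          · rw [finsum_eq_sum_of_support_subset _ hsupp5, if_pos (show m = -n from by omega),
              ← Finset.sum_smul]
            congr 1
            rw [Finset.sum_congr rfl (fun j _ => by rw [if_pos hM]), ← Finset.sum_mul]
            congr 1
            rw [Finset.sum_sub_distrib, Finset.sum_boole, Finset.sum_boole]
            have hf1 : Finset.filter (fun j => 0 ≤ m + j)
                (Finset.Icc (-(m.natAbs : ℤ) - 1) ((m.natAbs : ℤ) + 1))
                = Finset.Icc (-m) ((m.natAbs : ℤ) + 1) := by
              ext j
              simp only [Finset.mem_filter, Finset.mem_Icc]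
              omega
            have hf2 : Finset.filter (fun j => 0 ≤ j)
                (Finset.Icc (-(m.natAbs : ℤ) - 1) ((m.natAbs : ℤ) + 1))
                = Finset.Icc 0 ((m.natAbs : ℤ) + 1) := by
              ext j
              simp only [Finset.mem_filter, Finset.mem_Icc]
              omega
            rw [hf1, hf2, Int.card_Icc, Int.card_Icc]
            have e1 : (((m.natAbs : ℤ) + 1 + 1 - -m).toNat : ℤ) = (m.natAbs : ℤ) + 2 + m := by
              omega
            have e2 : (((m.natAbs : ℤ) + 1 + 1 - 0).toNat : ℤ) = (m.natAbs : ℤ) + 2 := by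
              omega
            have e1' : ((((m.natAbs : ℤ) + 1 + 1 - -m).toNat : ℕ) : ℂ)
                = (((m.natAbs : ℤ) + 2 + m : ℤ) : ℂ) := by exact_mod_cast congrArg (fun z : ℤ => (z : ℂ)) e1
            have e2' : ((((m.natAbs : ℤ) + 1 + 1 - 0).toNat : ℕ) : ℂ)
                = (((m.natAbs : ℤ) + 2 : ℤ) : ℂ) := by exact_mod_cast congrArg (fun z : ℤ => (z : ℂ)) e2
            rw [e1', e2']
            push_cast
            ring
          · rw [finsum_congr (fun j : ℤ => by
                rw [if_neg hM, zero_mul, zero_smul] :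
                ∀ j : ℤ, ((if m + n = 0 then
                  ((if 0 ≤ m + j then (1:ℂ) else 0) - (if 0 ≤ j then (1:ℂ) else 0)) else 0)
                  * (B a₁ b₂ * B b₁ a₂ - B a₁ a₂ * B b₁ b₂)) • v = (0 : V)),
              finsum_zero, if_neg (show ¬ m = -n from by omega), zero_mul, zero_smul]
        rw [hT1, hT2, hT3, hT4, hT5]
    _ = B a₁ b₂ • Nc b₁ a₂ (m + n) v - B a₁ a₂ • Nc b₁ b₂ (m + n) v
          + B b₁ a₂ • Nc a₁ b₂ (m + n) v - B b₁ b₂ • Nc a₁ a₂ (m + n) v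
          + ((if m = -n then (m : ℂ) else 0)
              * (B a₁ b₂ * B b₁ a₂ - B a₁ a₂ * B b₁ b₂)) • v := by abel
end

section
/- For the twisted toroidal Lie algebra T(g) = L(g,σ) ⊕ K with bracket [x⊗a, y⊗b] = [x,y]⊗ab + (x|y)\overline{b da} (central extension of the twisted loop algebra L(g,σ)), and for g = A_{2n-1} with r = 2: the map ψ defined in the paper satisfies [ψ(α_0(k)), ψ(α_j(ℓ))] = r a_{0j} k δ_{k,−ℓ} ψ(c̸) for all j ∈ {1,…,n} and k, ℓ ∈ Z, where ψ(c̸) = \overline{s^{-1}ds}, ψ(α_0(k)) = Σ_{p=0}^{r-1} σ^p(−h'_{θ^0}) ⊗ s^k + \overline{s^k t^{-1} dt}, and ψ(α_j(ℓ)) = (1 − δ_{j,σ(j)}(1 − 1/r)) Σ_{q=0}^{r-1} σ^q(h'_j) ⊗ s^ℓ. -/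
/-!
STATEMENT 18: For the twisted toroidal Lie algebra T(g) = L(g,σ) ⊕ K with bracket
[x⊗a, y⊗b] = [x,y]⊗ab + (x|y)\overline{b da}, for g = A_{2n-1} = sl_{2n} (n ≥ 3,
realized inside the 2n×2n matrices with (x|y) = tr(xy)) and r = 2: the map ψ of
the paper satisfies [ψ(α_0(k)), ψ(α_j(ℓ))] = r a_{0j} k δ_{k,−ℓ} ψ(c̸) for all
j ∈ {1,…,n} and k, ℓ ∈ ℤ.

Here A = ℂ[s^{±1}, t^{±1}] is the group algebra of ℤ × ℤ (`sm j m` = s^j t^m),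
K' = Ω_A/dA with projection `bar`, the g⊗A-component of the bracket is the Lie
bracket of the base-change Lie algebra A ⊗[ℂ] gl_{2n}, and the K'-component is the
(unique) ℂ-bilinear map κmap with κmap (a⊗x) (b⊗y) = tr(xy) • \overline{b da}
(taken as a hypothesis).  σ is the diagram automorphism x ↦ −J xᵀ J of A_{2n-1},
h'_i = E_{ii} − E_{i+1,i+1} the simple coroots, h'_{θ⁰} = Σ_{i=1}^{2n-2} h'_i, and
  ψ(c̸) = \overline{s^{-1}ds},
  ψ(α_0(k)) = Σ_{p=0}^{1} σ^p(−h'_{θ⁰}) ⊗ s^k + \overline{s^k t^{-1} dt},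
  ψ(α_j(ℓ)) = (1 − δ_{j,σ(j)}(1 − 1/2)) Σ_{q=0}^{1} σ^q(h'_j) ⊗ s^ℓ,
and a_{0j} = −δ_{j,2} (the A_{2n-1}^{(2)} Cartan matrix entry).
-/

open scoped TensorProduct

noncomputable section

abbrev A2 : Type := AddMonoidAlgebra ℂ (ℤ × ℤ)

/-- the monomial `s^j t^m`. -/
def sm (j m : ℤ) : A2 := AddMonoidAlgebra.single (j, m) 1

abbrev Omega2 := KaehlerDifferential ℂ A2

def dA2 : Submodule ℂ Omega2 :=
  LinearMap.range (KaehlerDifferential.D ℂ A2).toLinearMap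

abbrev Kp := Omega2 ⧸ dA2

def bar : Omega2 →ₗ[ℂ] Kp := dA2.mkQ

abbrev gl2n (n : ℕ) := Matrix (Fin (2 * n)) (Fin (2 * n)) ℂ

/-- `E_{ii}` (1-indexed). -/
def eMat (n : ℕ) (i : ℕ) : gl2n n :=
  Matrix.diagonal fun p => if (p : ℕ) + 1 = i then 1 else 0

/-- the simple coroot `h'_i = E_{ii} − E_{i+1,i+1}`. -/
def hco (n : ℕ) (i : ℕ) : gl2n n := eMat n i - eMat n (i + 1)

/-- `h'_{θ⁰} = h'_1 + ⋯ + h'_{2n−2}`, the coroot of θ⁰ = α'_1 + ⋯ + α'_{2n−2}. -/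
def hTheta (n : ℕ) : gl2n n := ∑ i ∈ Finset.Icc 1 (2 * n - 2), hco n i

/-- the diagram automorphism σ of A_{2n−1}: σ(x) = −J xᵀ J with J the
antidiagonal permutation matrix, i.e. (σ x)_{ij} = −x_{rev j, rev i}. -/
def sigmaM (n : ℕ) (x : gl2n n) : gl2n n := fun i j => -x j.rev i.rev

/-- `ψ(c̸) = \overline{s^{-1} ds}` (with zero loop-algebra component). -/
def ψc (n : ℕ) : (A2 ⊗[ℂ] gl2n n) × Kp :=
  (0, bar (sm (-1) 0 • KaehlerDifferential.D ℂ A2 (sm 1 0)))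

/-- `ψ(α_0(k)) = Σ_{p=0}^{1} σ^p(−h'_{θ⁰}) ⊗ s^k + \overline{s^k t^{-1} dt}`. -/
def ψα0 (n : ℕ) (k : ℤ) : (A2 ⊗[ℂ] gl2n n) × Kp :=
  (∑ p ∈ Finset.range 2, sm k 0 ⊗ₜ[ℂ] (sigmaM n)^[p] (-hTheta n),
    bar (sm k (-1) • KaehlerDifferential.D ℂ A2 (sm 0 1)))

/-- `ψ(α_j(ℓ)) = (1 − δ_{j,σ(j)}(1 − 1/r)) Σ_{q=0}^{1} σ^q(h'_j) ⊗ s^ℓ`, r = 2,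
σ(j) = 2n − j. -/
def ψαj (n : ℕ) (j : ℕ) (ℓ : ℤ) : (A2 ⊗[ℂ] gl2n n) × Kp :=
  ((1 - (if (j : ℤ) = 2 * (n : ℤ) - (j : ℤ) then (1 : ℂ) - 1 / 2 else 0)) •
      ∑ q ∈ Finset.range 2, sm ℓ 0 ⊗ₜ[ℂ] (sigmaM n)^[q] (hco n j),
    0)

/-!
All the coroots involved are diagonal matrices, so the loop-algebra part of the bracket vanishes
and only the central term `tr(XY) • \overline{s^ℓ d s^k}` survives. Since `σ` is an involution
preserving the trace form, the trace of the two `σ`-orbit sums is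
`2 ((-h'_{θ⁰} | h'_j) + (-h'_{θ⁰} | σ h'_j)) = 2 (-δ_{j1} + δ_{j1} - δ_{j2}) = -2 δ_{j2}`.
Finally `s^ℓ d(s^k) = k s^{k+ℓ-1} ds` is exact unless `k + ℓ = 0`.
-/

theorem lie_tmul_tmul {R A B : Type*} [CommRing R] [CommRing A] [Ring B] [Algebra R A]
    [Algebra R B] (a b : A) (x y : B) :
    ⁅a ⊗ₜ[R] x, b ⊗ₜ[R] y⁆ = (a * b) ⊗ₜ[R] ⁅x, y⁆ := by
  rw [Ring.lie_def, Ring.lie_def, Algebra.TensorProduct.tmul_mul_tmul,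
    Algebra.TensorProduct.tmul_mul_tmul, mul_comm b a, TensorProduct.tmul_sub]

theorem Matrix.IsDiag.commute {ι α : Type*} [Fintype ι] [DecidableEq ι] [CommSemiring α]
    {M N : Matrix ι ι α} (hM : M.IsDiag) (hN : N.IsDiag) : Commute M N := by
  rw [← hM.diagonal_diag, ← hN.diagonal_diag]
  exact Matrix.commute_diagonal _ _

theorem Derivation.leibniz_units_zpow {R A M : Type*} [CommRing R] [CommRing A] [AddCommGroup M]
    [Algebra R A] [Module A M] [Module R M] (D : Derivation R A M) (u : Aˣ) (k : ℤ) :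
    D ↑(u ^ k) = k • (↑(u ^ (k - 1)) : A) • D ↑u := by
  induction k using Int.induction_on with
  | zero => simp
  | succ i ih =>
    rw [zpow_add_one, Units.val_mul, D.leibniz, ih, smul_comm, smul_smul, ← Units.val_mul,
      show u * u ^ ((i : ℤ) - 1) = u ^ (i : ℤ) by group, add_sub_cancel_right, add_smul, one_smul,
      add_comm]
  | pred i ih =>
    have hinv : D ↑u⁻¹ = -(↑(u⁻¹ ^ 2) : A) • D ↑u :=
      D.leibniz_of_mul_eq_one (by simp)
    rw [zpow_sub_one, Units.val_mul, D.leibniz, ih, hinv, neg_smul, smul_neg, smul_smul, smul_comm,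
      smul_smul, ← Units.val_mul, ← Units.val_mul,
      show u ^ (-(i : ℤ)) * u⁻¹ ^ 2 = u ^ (-(i : ℤ) - 1 - 1) by group,
      show u⁻¹ * u ^ (-(i : ℤ) - 1) = u ^ (-(i : ℤ) - 1 - 1) by group, sub_smul, one_smul]
    abel

theorem sm_mul (j m j' m' : ℤ) : sm j m * sm j' m' = sm (j + j') (m + m') := by
  simp [sm, AddMonoidAlgebra.single_mul_single]

def sUnit : A2ˣ := (AddMonoidAlgebra.of ℂ (ℤ × ℤ)).toHomUnits (Multiplicative.ofAdd (1, 0))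

theorem val_sUnit_zpow (k : ℤ) : ((sUnit ^ k : A2ˣ) : A2) = sm k 0 := by
  rw [sUnit, ← map_zpow, ← ofAdd_zsmul]
  simp [sm]

theorem D_sm (k : ℤ) :
    KaehlerDifferential.D ℂ A2 (sm k 0) =
      (k : ℂ) • sm (k - 1) 0 • KaehlerDifferential.D ℂ A2 (sm 1 0) := by
  rw [← val_sUnit_zpow k, Derivation.leibniz_units_zpow, val_sUnit_zpow, ← zpow_one sUnit,
    val_sUnit_zpow, Int.cast_smul_eq_zsmul]

theorem bar_D (a : A2) : bar (KaehlerDifferential.D ℂ A2 a) = 0 :=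
  (Submodule.Quotient.mk_eq_zero _).mpr ⟨a, rfl⟩

theorem bar_sm_smul_D_sm (k ℓ : ℤ) :
    bar (sm ℓ 0 • KaehlerDifferential.D ℂ A2 (sm k 0)) =
      ((k : ℂ) * if k = -ℓ then 1 else 0) •
        bar (sm (-1) 0 • KaehlerDifferential.D ℂ A2 (sm 1 0)) := by
  rw [D_sm k, smul_comm, smul_smul, sm_mul, add_zero, map_smul]
  split_ifs with h
  · rw [mul_one, show ℓ + (k - 1) = -1 by omega]
  · have hm : ((ℓ + k : ℤ) : ℂ) ≠ 0 := Int.cast_ne_zero.mpr (by omega)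
    rw [show sm (ℓ + (k - 1)) 0 • KaehlerDifferential.D ℂ A2 (sm 1 0) =
        ((ℓ + k : ℤ) : ℂ)⁻¹ • KaehlerDifferential.D ℂ A2 (sm (ℓ + k) 0) by
      rw [D_sm (ℓ + k), smul_smul, inv_mul_cancel₀ hm, one_smul, add_sub_assoc], map_smul, bar_D,
      smul_zero, smul_zero, mul_zero, zero_smul]

section Coroots

variable {n : ℕ}

theorem Matrix.IsDiag.sigmaM {x : gl2n n} (hx : x.IsDiag) : (sigmaM n x).IsDiag :=
  (hx.submatrix Fin.rev_injective).transpose.neg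

theorem sigmaM_sigmaM (x : gl2n n) : sigmaM n (sigmaM n x) = x := by
  ext i j
  simp [sigmaM]

theorem sigmaM_sub (x y : gl2n n) : sigmaM n (x - y) = sigmaM n x - sigmaM n y := by
  ext i j
  simp only [sigmaM, Matrix.sub_apply]
  ring

theorem trace_sigmaM_mul_sigmaM (x y : gl2n n) :
    Matrix.trace (sigmaM n x * sigmaM n y) = Matrix.trace (x * y) := by
  rw [Matrix.trace_mul_comm x]
  simp only [Matrix.trace, Matrix.diag, Matrix.mul_apply, sigmaM, neg_mul_neg]
  exact Fintype.sum_equiv Fin.revPerm _ _ fun i =>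
    Fintype.sum_equiv Fin.revPerm _ _ fun p => by simp [mul_comm]

theorem trace_add_sigmaM_mul_add_sigmaM (x y : gl2n n) :
    Matrix.trace ((x + sigmaM n x) * (y + sigmaM n y)) =
      2 * (Matrix.trace (x * y) + Matrix.trace (x * sigmaM n y)) := by
  have hswap : Matrix.trace (sigmaM n x * y) = Matrix.trace (x * sigmaM n y) := by
    rw [← trace_sigmaM_mul_sigmaM, sigmaM_sigmaM]
  simp only [add_mul, mul_add, Matrix.trace_add, trace_sigmaM_mul_sigmaM, hswap]
  ring

theorem isDiag_eMat (a : ℕ) : (eMat n a).IsDiag := Matrix.isDiag_diagonal _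

theorem sigmaM_eMat {a : ℕ} (ha : 1 ≤ a) (ha' : a ≤ 2 * n) :
    sigmaM n (eMat n a) = -eMat n (2 * n + 1 - a) := by
  ext i j
  have hi := Fin.val_rev i
  have hj := Fin.val_rev j
  by_cases h : i = j
  · subst h
    simp only [sigmaM, eMat, Matrix.diagonal_apply_eq, Matrix.neg_apply]
    congr 1
    exact if_congr (by omega) rfl rfl
  · have h' : j.rev ≠ i.rev := fun e => h (Fin.rev_injective e).symm
    simp [sigmaM, eMat, Matrix.diagonal_apply_ne _ h, Matrix.diagonal_apply_ne _ h']

theorem trace_eMat_mul_eMat {a : ℕ} (ha : 1 ≤ a) (ha' : a ≤ 2 * n) (b : ℕ) :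
    Matrix.trace (eMat n a * eMat n b) = if a = b then 1 else 0 := by
  rw [eMat, eMat, Matrix.diagonal_mul_diagonal, Matrix.trace_diagonal,
    Finset.sum_eq_single_of_mem (⟨a - 1, by omega⟩ : Fin (2 * n)) (Finset.mem_univ _)]
  · simp only [show a - 1 + 1 = a by omega, if_true, one_mul]
  · intro p _ hp
    rw [if_neg fun h => hp (Fin.ext (by simp; omega)), zero_mul]

theorem trace_eMat_sub_mul_eMat_sub {a b : ℕ} (ha : 1 ≤ a) (ha' : a ≤ 2 * n) (hb : 1 ≤ b)
    (hb' : b ≤ 2 * n) (c d : ℕ) :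
    Matrix.trace ((eMat n a - eMat n b) * (eMat n c - eMat n d)) =
      (if a = c then 1 else 0) - (if a = d then 1 else 0) - (if b = c then 1 else 0) +
        (if b = d then 1 else 0) := by
  simp only [sub_mul, mul_sub, Matrix.trace_sub, trace_eMat_mul_eMat ha ha',
    trace_eMat_mul_eMat hb hb']
  ring

theorem hTheta_eq (hn : 1 ≤ n) : hTheta n = eMat n 1 - eMat n (2 * n - 1) := by
  rw [hTheta, ← Finset.Ico_add_one_right_eq_Icc, show 2 * n - 2 + 1 = 2 * n - 1 by omega,
    ← neg_sub, ← Finset.sum_Ico_sub _ (by omega), ← Finset.sum_neg_distrib]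
  simp only [hco, neg_sub]

theorem neg_hTheta_eq (hn : 1 ≤ n) : -hTheta n = eMat n (2 * n - 1) - eMat n 1 := by
  rw [hTheta_eq hn, neg_sub]

theorem sigmaM_hco {j : ℕ} (hj : 1 ≤ j) (hj' : j < 2 * n) :
    sigmaM n (hco n j) = eMat n (2 * n - j) - eMat n (2 * n + 1 - j) := by
  rw [hco, sigmaM_sub, sigmaM_eMat hj (by omega), sigmaM_eMat (by omega) hj',
    show 2 * n + 1 - (j + 1) = 2 * n - j by omega, neg_sub_neg]

theorem isDiag_neg_hTheta (hn : 1 ≤ n) : (-hTheta n).IsDiag := by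
  rw [neg_hTheta_eq hn]
  exact (isDiag_eMat _).sub (isDiag_eMat _)

theorem isDiag_hco (j : ℕ) : (hco n j).IsDiag := (isDiag_eMat _).sub (isDiag_eMat _)

variable {j : ℕ}

theorem trace_neg_hTheta_mul_hco (hn : 3 ≤ n) (hj : 1 ≤ j) (hj' : j ≤ n) :
    Matrix.trace (-hTheta n * hco n j) = if j = 1 then -1 else 0 := by
  rw [neg_hTheta_eq (by omega), hco, trace_eMat_sub_mul_eMat_sub (by omega) (by omega) le_rfl
    (by omega)]
  split_ifs <;> first | omega | norm_num

theorem trace_neg_hTheta_mul_sigmaM_hco (hn : 3 ≤ n) (hj : 1 ≤ j) (hj' : j ≤ n) :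
    Matrix.trace (-hTheta n * sigmaM n (hco n j)) =
      (if j = 1 then 1 else 0) - if j = 2 then 1 else 0 := by
  rw [neg_hTheta_eq (by omega), sigmaM_hco hj (by omega),
    trace_eMat_sub_mul_eMat_sub (by omega) (by omega) le_rfl (by omega)]
  split_ifs <;> first | omega | norm_num

theorem trace_neg_hTheta_add_sigmaM_mul_hco_add_sigmaM (hn : 3 ≤ n) (hj : 1 ≤ j) (hj' : j ≤ n) :
    Matrix.trace ((-hTheta n + sigmaM n (-hTheta n)) * (hco n j + sigmaM n (hco n j))) =
      if j = 2 then -2 else 0 := by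
  rw [trace_add_sigmaM_mul_add_sigmaM, trace_neg_hTheta_mul_hco hn hj hj',
    trace_neg_hTheta_mul_sigmaM_hco hn hj hj']
  split_ifs <;> first | omega | norm_num

end Coroots

theorem stmt18 (n : ℕ) (hn : 3 ≤ n)
    (κmap : (A2 ⊗[ℂ] gl2n n) →ₗ[ℂ] (A2 ⊗[ℂ] gl2n n) →ₗ[ℂ] Kp)
    (hκ : ∀ (a b : A2) (x y : gl2n n),
      κmap (a ⊗ₜ x) (b ⊗ₜ y) =
        Matrix.trace (x * y) • bar (b • KaehlerDifferential.D ℂ A2 a)) :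
    ∀ (j : ℕ) (k ℓ : ℤ), 1 ≤ j → j ≤ n →
      ((⁅(ψα0 n k).1, (ψαj n j ℓ).1⁆, κmap (ψα0 n k).1 (ψαj n j ℓ).1) :
          (A2 ⊗[ℂ] gl2n n) × Kp) =
        ((2 : ℂ) * (if j = 2 then -1 else 0) * (k : ℂ) * (if k = -ℓ then 1 else 0)) •
          ψc n := by
  intro j k ℓ hj hj'
  have hn1 : 1 ≤ n := by omega
  set c : ℂ := 1 - if (j : ℤ) = 2 * (n : ℤ) - (j : ℤ) then (1 : ℂ) - 1 / 2 else 0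
  set X := -hTheta n + sigmaM n (-hTheta n)
  set Y := hco n j + sigmaM n (hco n j)
  have hψ0 : (ψα0 n k).1 = sm k 0 ⊗ₜ X := by
    simp [ψα0, X, Finset.sum_range_succ, TensorProduct.tmul_add]
  have hψj : (ψαj n j ℓ).1 = sm ℓ 0 ⊗ₜ (c • Y) := by
    simp [ψαj, Y, c, Finset.sum_range_succ, TensorProduct.tmul_add]
  have hcomm : Commute X (c • Y) :=
    Matrix.IsDiag.commute ((isDiag_neg_hTheta hn1).add (isDiag_neg_hTheta hn1).sigmaM)
      (((isDiag_hco j).add (isDiag_hco j).sigmaM).smul c)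
  have htrace : Matrix.trace (X * (c • Y)) = if j = 2 then -2 else 0 := by
    rw [Matrix.mul_smul, Matrix.trace_smul, trace_neg_hTheta_add_sigmaM_mul_hco_add_sigmaM hn hj hj',
      smul_eq_mul]
    -- for `j = 2` the coefficient `c` is `1`, as `2 ≠ 2n - 2` when `n ≥ 3`
    simp only [c]
    split_ifs <;> first | omega | norm_num
  rw [hψ0, hψj, ψc, Prod.smul_mk, smul_zero, lie_tmul_tmul, hcomm.lie_eq, TensorProduct.tmul_zero,
    hκ, htrace, bar_sm_smul_D_sm, smul_smul]
  congr 2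
  split_ifs <;> ring
end
end

section
/- Fermionic realization relation for type A_{2n-1}: with fields X(α_n, z) = :ε_n(z) ε*_{n̄}(z):, X(−α_n, w) = :ε_{n̄}(w) ε*_n(w):, and α_n(w) = :ε_n(w)ε*_n(w): + :ε*_{n̄}(w)ε_{n̄}(w):, one has the operator identity on the fermionic Fock space V: [X(α_n, z), X(−α_n, w)] = α_n(w) δ(z−w) + ∂_w δ(z−w). -/
open Function

lemma aux_comm {R : Type*} [Ring R] (A D C Bo x y : R)
    (hx : ∀ r : R, x * r = r * x) (hy : ∀ r : R, y * r = r * y)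
    (hAC : A * C + C * A = 0) (hDB : D * Bo + Bo * D = 0)
    (hDC : D * C + C * D = y) (hAB : A * Bo + Bo * A = x) :
    A * D * (C * Bo) = C * Bo * (A * D) + y * (A * Bo) - x * (C * D) := by
  have hDC' : D * C = y - C * D := eq_sub_of_add_eq hDC
  have hAC' : A * C = -(C * A) := eq_neg_of_add_eq_zero_left hAC
  have hDB' : D * Bo = -(Bo * D) := eq_neg_of_add_eq_zero_left hDB
  have hAB' : A * Bo = x - Bo * A := eq_sub_of_add_eq hAB
  calc A * D * (C * Bo) = A * (D * C) * Bo := by noncomm_ring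
    _ = A * (y - C * D) * Bo := by rw [hDC']
    _ = A * y * Bo - A * C * (D * Bo) := by noncomm_ring
    _ = A * y * Bo - -(C * A) * (D * Bo) := by rw [← hAC']
    _ = A * y * Bo + C * (A * (D * Bo)) := by noncomm_ring
    _ = A * y * Bo + C * (A * -(Bo * D)) := by rw [← hDB']
    _ = A * y * Bo - C * ((A * Bo) * D) := by noncomm_ring
    _ = A * y * Bo - C * ((x - Bo * A) * D) := by rw [← hAB']
    _ = A * y * Bo - C * (x * D) + C * Bo * (A * D) := by noncomm_ring
    _ = y * (A * Bo) - x * (C * D) + C * Bo * (A * D) := by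
          rw [show A * y * Bo = y * (A * Bo) by rw [← hy A, mul_assoc],
              show C * (x * D) = x * (C * D) by rw [← mul_assoc, ← hx C, mul_assoc]]
    _ = C * Bo * (A * D) + y * (A * Bo) - x * (C * D) := by abel

lemma aux_ind_fin (m : ℤ) :
    (support fun j : ℤ => ((if 0 ≤ j then (1:ℂ) else 0) - (if m ≤ j then 1 else 0))).Finite := by
  apply (Set.finite_Icc (min 0 m) (max 0 m)).subset
  rw [support_subset_iff]
  intro j hj
  by_contra hc
  apply hj
  simp only [Set.mem_Icc, not_and_or, not_le] at hc
  rcases hc with hc | hc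
  · rw [if_neg (by omega), if_neg (by omega), sub_self]
  · rw [if_pos (by omega), if_pos (by omega), sub_self]

lemma aux_ind (m : ℤ) :
    ∑ᶠ j : ℤ, ((if 0 ≤ j then (1:ℂ) else 0) - (if m ≤ j then 1 else 0)) = (m : ℂ) := by
  rcases le_total 0 m with hm | hm
  · rw [finsum_eq_sum_of_support_subset _ (s := Finset.Ico 0 m) ?_]
    · have hc1 : ∑ j ∈ Finset.Ico 0 m, ((if 0 ≤ j then (1:ℂ) else 0) - (if m ≤ j then 1 else 0))
          = ∑ _j ∈ Finset.Ico 0 m, (1:ℂ) := by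
        refine Finset.sum_congr rfl (fun j hj => ?_)
        rw [Finset.mem_Ico] at hj
        rw [if_pos (by omega), if_neg (by omega), sub_zero]
      rw [hc1, Finset.sum_const, nsmul_eq_mul, mul_one, Int.card_Ico]
      have h1 : (((m - 0).toNat : ℤ) : ℂ) = ((m : ℤ) : ℂ) := by exact_mod_cast congrArg (fun z : ℤ => (z : ℂ)) (by omega : ((m - 0).toNat : ℤ) = m)
      exact_mod_cast h1
    · rw [support_subset_iff]
      intro j hj
      by_contra hc
      apply hj
      simp only [Finset.coe_Ico, Set.mem_Ico, not_and_or, not_le, not_lt] at hc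
      rcases hc with hc | hc
      · rw [if_neg (by omega), if_neg (by omega), sub_self]
      · rw [if_pos (by omega), if_pos (by omega), sub_self]
  · rw [finsum_eq_sum_of_support_subset _ (s := Finset.Ico m 0) ?_]
    · have hc1 : ∑ j ∈ Finset.Ico m 0, ((if 0 ≤ j then (1:ℂ) else 0) - (if m ≤ j then 1 else 0))
          = ∑ _j ∈ Finset.Ico m 0, (-1:ℂ) := by
        refine Finset.sum_congr rfl (fun j hj => ?_)
        rw [Finset.mem_Ico] at hj
        rw [if_neg (by omega), if_pos (by omega), zero_sub]
      rw [hc1, Finset.sum_const, nsmul_eq_mul, Int.card_Ico]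
      have h1 : (((0 - m).toNat : ℤ) : ℂ) = ((-m : ℤ) : ℂ) := by exact_mod_cast congrArg (fun z : ℤ => (z : ℂ)) (by omega : ((0 - m).toNat : ℤ) = -m)
      push_cast at h1 ⊢
      rw [h1]; ring
    · rw [support_subset_iff]
      intro j hj
      by_contra hc
      apply hj
      simp only [Finset.coe_Ico, Set.mem_Ico, not_and_or, not_le, not_lt] at hc
      rcases hc with hc | hc
      · rw [if_neg (by omega), if_neg (by omega), sub_self]
      · rw [if_pos (by omega), if_pos (by omega), sub_self]

lemma main_aux {V : Type*} [AddCommGroup V] [Module ℂ V]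
    (A Bo C D : ℤ → Module.End ℂ V) (m n : ℤ) (v : V)
    (hAB : ∀ r s : ℤ, A r * Bo s + Bo s * A r = (if r + s = -1 then (1:ℂ) else 0) • 1)
    (hDC : ∀ r s : ℤ, D r * C s + C s * D r = (if r + s = -1 then (1:ℂ) else 0) • 1)
    (hAD : ∀ r s : ℤ, A r * D s + D s * A r = 0)
    (hAC : ∀ r s : ℤ, A r * C s + C s * A r = 0)
    (hBC : ∀ r s : ℤ, Bo r * C s + C s * Bo r = 0)
    (hBD : ∀ r s : ℤ, Bo r * D s + D s * Bo r = 0)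
    (hFX : ∀ w : V, (Function.support fun j : ℤ => (A j * D (m - j - 1)) w).Finite)
    (hFY : ∀ w : V, (Function.support fun i : ℤ => (C i * Bo (n - i - 1)) w).Finite)
    (hFab : (Function.support fun j : ℤ =>
      (if j < 0 then A j * Bo (m + n - j - 1) else -(Bo (m + n - j - 1) * A j)) v).Finite)
    (hFdc : (Function.support fun i : ℤ =>
      (if i < 0 then D i * C (m + n - i - 1) else -(C (m + n - i - 1) * D i)) v).Finite) :
    (∑ᶠ j : ℤ, (A j * D (m - j - 1)) (∑ᶠ i : ℤ, (C i * Bo (n - i - 1)) v))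
      - (∑ᶠ i : ℤ, (C i * Bo (n - i - 1)) (∑ᶠ j : ℤ, (A j * D (m - j - 1)) v)) =
    ((∑ᶠ j : ℤ, (if j < 0 then A j * Bo (m + n - j - 1) else -(Bo (m + n - j - 1) * A j)) v)
      + ∑ᶠ i : ℤ, (if i < 0 then D i * C (m + n - i - 1) else -(C (m + n - i - 1) * D i)) v)
      + (if m = -n then (m:ℂ) else 0) • v := by
  set XT : ℤ → Module.End ℂ V := fun j => A j * D (m - j - 1) with hXT
  set YT : ℤ → Module.End ℂ V := fun i => C i * Bo (n - i - 1) with hYT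
  set Tab : ℤ → Module.End ℂ V :=
    fun j => if j < 0 then A j * Bo (m + n - j - 1) else -(Bo (m + n - j - 1) * A j) with hTab
  set Tdc : ℤ → Module.End ℂ V :=
    fun i => if i < 0 then D i * C (m + n - i - 1) else -(C (m + n - i - 1) * D i) with hTdc
  -- the operator commutator
  have hcomm : ∀ j i : ℤ, XT j * YT i = YT i * XT j
      + ((if i = j - m then A j * Bo (m + n - j - 1) else 0)
        - (if i = j + n then C (j + n) * D (m - j - 1) else 0)) := by
    intro j i
    have hx : ∀ r : Module.End ℂ V,
        ((if i = j + n then (1:ℂ) else 0) • 1) * r = r * ((if i = j + n then (1:ℂ) else 0) • 1) := by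
      intro r; rw [smul_mul_assoc, mul_smul_comm, one_mul, mul_one]
    have hy : ∀ r : Module.End ℂ V,
        ((if i = j - m then (1:ℂ) else 0) • 1) * r = r * ((if i = j - m then (1:ℂ) else 0) • 1) := by
      intro r; rw [smul_mul_assoc, mul_smul_comm, one_mul, mul_one]
    have hdc : D (m - j - 1) * C i + C i * D (m - j - 1) = (if i = j - m then (1:ℂ) else 0) • 1 := by
      rw [hDC (m - j - 1) i]
      simp only [show ((m - j - 1) + i = -1) ↔ (i = j - m) from by omega]
    have hab : A j * Bo (n - i - 1) + Bo (n - i - 1) * A j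
        = (if i = j + n then (1:ℂ) else 0) • 1 := by
      rw [hAB j (n - i - 1)]
      simp only [show (j + (n - i - 1) = -1) ↔ (i = j + n) from by omega]
    have hdb : D (m - j - 1) * Bo (n - i - 1) + Bo (n - i - 1) * D (m - j - 1) = 0 := by
      rw [add_comm]; exact hBD (n - i - 1) (m - j - 1)
    have key := aux_comm (A j) (D (m - j - 1)) (C i) (Bo (n - i - 1)) _ _ hx hy
      (hAC j i) hdb hdc hab
    have e1 : (if i = j - m then (1:ℂ) else 0) • (A j * Bo (n - i - 1))
        = (if i = j - m then A j * Bo (m + n - j - 1) else 0) := by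
      split_ifs with h
      · rw [one_smul, show n - i - 1 = m + n - j - 1 by omega]
      · rw [zero_smul]
    have e2 : (if i = j + n then (1:ℂ) else 0) • (C i * D (m - j - 1))
        = (if i = j + n then C (j + n) * D (m - j - 1) else 0) := by
      split_ifs with h
      · rw [one_smul, h]
      · rw [zero_smul]
    calc XT j * YT i = A j * D (m - j - 1) * (C i * Bo (n - i - 1)) := rfl
      _ = C i * Bo (n - i - 1) * (A j * D (m - j - 1))
            + ((if i = j - m then (1:ℂ) else 0) • 1) * (A j * Bo (n - i - 1))
            - ((if i = j + n then (1:ℂ) else 0) • 1) * (C i * D (m - j - 1)) := key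
      _ = YT i * XT j + ((if i = j - m then A j * Bo (m + n - j - 1) else 0)
            - (if i = j + n then C (j + n) * D (m - j - 1) else 0)) := by
          rw [smul_mul_assoc, one_mul, smul_mul_assoc, one_mul, e1, e2]
          abel
  -- pointwise, applied to v
  have hcommv : ∀ j i : ℤ, (XT j) ((YT i) v) = (YT i) ((XT j) v)
      + ((if i = j - m then (A j) ((Bo (m + n - j - 1)) v) else 0)
        - (if i = j + n then (C (j + n)) ((D (m - j - 1)) v) else 0)) := by
    intro j i
    have h := LinearMap.congr_fun (hcomm j i) v
    simpa [Module.End.mul_apply, apply_ite (fun f : Module.End ℂ V => f v)] using h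
  -- single-point support sums
  have hsingle : ∀ (c : ℤ) (x : V), (∑ᶠ i : ℤ, if i = c then x else 0) = x := by
    intro c x
    rw [finsum_eq_single _ c (fun i hi => if_neg hi), if_pos rfl]
  have hsinglefin : ∀ (c : ℤ) (x : V),
      (support fun i : ℤ => if i = c then x else 0).Finite := by
    intro c x
    apply (Set.finite_singleton c).subset
    rw [support_subset_iff]
    intro i hi
    by_contra hc
    exact hi (if_neg hc)
  -- main per-j step
  have hstep : ∀ j : ℤ, (XT j) (∑ᶠ i : ℤ, (YT i) v)
      = (∑ᶠ i : ℤ, (YT i) ((XT j) v))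
        + ((A j) ((Bo (m + n - j - 1)) v) - (C (j + n)) ((D (m - j - 1)) v)) := by
    intro j
    have hmap := (XT j).toAddMonoidHom.map_finsum (f := fun i => (YT i) v) (hFY v)
    simp only [LinearMap.toAddMonoidHom_coe] at hmap
    rw [hmap]
    have : ∀ i : ℤ, (XT j) ((YT i) v) = (YT i) ((XT j) v)
        + ((if i = j - m then (A j) ((Bo (m + n - j - 1)) v) else 0)
          - (if i = j + n then (C (j + n)) ((D (m - j - 1)) v) else 0)) := fun i => hcommv j i
    rw [finsum_congr this]
    have hs2 : (support fun i : ℤ =>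
        ((if i = j - m then (A j) ((Bo (m + n - j - 1)) v) else 0)
          - (if i = j + n then (C (j + n)) ((D (m - j - 1)) v) else 0))).Finite := by
      apply ((hsinglefin (j - m) ((A j) ((Bo (m + n - j - 1)) v))).union
        (hsinglefin (j + n) ((C (j + n)) ((D (m - j - 1)) v)))).subset
      rw [support_subset_iff]
      intro i hi
      by_contra hc
      simp only [Set.mem_union, mem_support, not_or, not_not] at hc
      exact hi (by rw [hc.1, hc.2, sub_self])
    rw [finsum_add_distrib (hFY ((XT j) v)) hs2,
      finsum_sub_distrib (hsinglefin (j - m) _) (hsinglefin (j + n) _), hsingle, hsingle]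
  -- express the delta terms via the normally ordered products Tab, Tdc
  have hPab : ∀ j : ℤ, (A j) ((Bo (m + n - j - 1)) v)
      = (Tab j) v + (if 0 ≤ j ∧ m + n = 0 then v else 0) := by
    intro j
    simp only [hTab]
    by_cases hj : j < 0
    · rw [if_pos hj, if_neg (by omega : ¬(0 ≤ j ∧ m + n = 0)), add_zero, Module.End.mul_apply]
    · rw [if_neg hj]
      have h := hAB j (m + n - j - 1)
      simp only [show (j + (m + n - j - 1) = -1) ↔ (m + n = 0) from by omega] at h
      have h' : A j * Bo (m + n - j - 1)
          = -(Bo (m + n - j - 1) * A j) + (if m + n = 0 then (1:ℂ) else 0) • 1 := by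
        rw [← h]; abel
      have hv := LinearMap.congr_fun h' v
      simp only [Module.End.mul_apply, LinearMap.add_apply, LinearMap.neg_apply,
        LinearMap.smul_apply, Module.End.one_apply, ite_smul, one_smul, zero_smul,
        apply_ite (fun f : Module.End ℂ V => f v), LinearMap.zero_apply] at hv ⊢
      rw [hv]
      simp only [show (0 ≤ j ∧ m + n = 0) ↔ (m + n = 0) from by omega]
  have hQdc : ∀ j : ℤ, (C (j + n)) ((D (m - j - 1)) v)
      = -((Tdc (m - j - 1)) v) + (if m ≤ j ∧ m + n = 0 then v else 0) := by
    intro j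
    simp only [hTdc]
    rw [show m + n - (m - j - 1) - 1 = j + n by omega]
    by_cases hj : m ≤ j
    · rw [if_pos (show m - j - 1 < 0 by omega)]
      have h := hDC (m - j - 1) (j + n)
      simp only [show ((m - j - 1) + (j + n) = -1) ↔ (m + n = 0) from by omega] at h
      have h' : C (j + n) * D (m - j - 1)
          = -(D (m - j - 1) * C (j + n)) + (if m + n = 0 then (1:ℂ) else 0) • 1 := by
        rw [← h]; abel
      have hv := LinearMap.congr_fun h' v
      simp only [Module.End.mul_apply, LinearMap.add_apply, LinearMap.neg_apply,
        LinearMap.smul_apply, Module.End.one_apply, ite_smul, one_smul, zero_smul,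
        apply_ite (fun f : Module.End ℂ V => f v), LinearMap.zero_apply] at hv ⊢
      rw [hv]
      simp only [show (m ≤ j ∧ m + n = 0) ↔ (m + n = 0) from by omega]
    · rw [if_neg (show ¬(m - j - 1 < 0) by omega),
        if_neg (by omega : ¬(m ≤ j ∧ m + n = 0)), add_zero]
      simp only [LinearMap.neg_apply, Module.End.mul_apply, neg_neg]
  have hPQ : ∀ j : ℤ, (A j) ((Bo (m + n - j - 1)) v) - (C (j + n)) ((D (m - j - 1)) v)
      = (Tab j) v + (Tdc (m - j - 1)) v
        + ((if 0 ≤ j ∧ m + n = 0 then v else 0) - (if m ≤ j ∧ m + n = 0 then v else 0)) := by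
    intro j; rw [hPab j, hQdc j]; abel
  -- finiteness of supports
  have hfchi : (support fun j : ℤ =>
      ((if 0 ≤ j ∧ m + n = 0 then v else 0) - (if m ≤ j ∧ m + n = 0 then v else 0))).Finite := by
    apply (Set.finite_Icc (min 0 m) (max 0 m)).subset
    rw [support_subset_iff]
    intro j hj
    by_contra hc
    apply hj
    simp only [Set.mem_Icc, not_and_or, not_le] at hc
    by_cases hmn : m + n = 0
    · rcases hc with hc | hc
      · rw [if_neg (by omega : ¬(0 ≤ j ∧ m + n = 0)),
          if_neg (by omega : ¬(m ≤ j ∧ m + n = 0)), sub_self]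
      · rw [if_pos (⟨by omega, hmn⟩ : (0 ≤ j ∧ m + n = 0)),
          if_pos (⟨by omega, hmn⟩ : (m ≤ j ∧ m + n = 0)), sub_self]
    · rw [if_neg (fun h => hmn h.2), if_neg (fun h => hmn h.2), sub_self]
  have hfdc' : (support fun j : ℤ => (Tdc (m - j - 1)) v).Finite := by
    have hsub : (support fun j : ℤ => (Tdc (m - j - 1)) v)
        ⊆ (fun j : ℤ => m - j - 1) ⁻¹' (support fun i : ℤ => (Tdc i) v) := fun j hj => hj
    exact Set.Finite.subset
      (Set.Finite.preimage (fun a _ b _ hab => by omega) hFdc) hsub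
  have hfPQ : (support fun j : ℤ =>
      ((A j) ((Bo (m + n - j - 1)) v) - (C (j + n)) ((D (m - j - 1)) v))).Finite := by
    apply ((hFab.union hfdc').union hfchi).subset
    rw [support_subset_iff]
    intro j hj
    by_contra hc
    apply hj
    simp only [Set.mem_union, mem_support, not_or, not_not] at hc
    rw [hPQ j, hc.1.1, hc.1.2, hc.2]
    simp
  have hfN : (support fun j : ℤ => ∑ᶠ i : ℤ, (YT i) ((XT j) v)).Finite := by
    apply ((hFX (∑ᶠ i : ℤ, (YT i) v)).union hfPQ).subset
    rw [support_subset_iff]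
    intro j hj
    by_contra hc
    apply hj
    simp only [Set.mem_union, mem_support, not_or, not_not] at hc
    have h3 : (∑ᶠ i : ℤ, (YT i) ((XT j) v))
        = (XT j) (∑ᶠ i : ℤ, (YT i) v)
          - ((A j) ((Bo (m + n - j - 1)) v) - (C (j + n)) ((D (m - j - 1)) v)) := by
      rw [hstep j]; abel
    rw [h3, hc.1, hc.2]
    simp
  -- Nc(Y) is additive, so it commutes with the finsum over j
  have hNadd : ∀ u w : V,
      (∑ᶠ i : ℤ, (YT i) (u + w)) = (∑ᶠ i : ℤ, (YT i) u) + ∑ᶠ i : ℤ, (YT i) w := by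
    intro u w
    rw [finsum_congr (fun i : ℤ => (YT i).map_add u w), finsum_add_distrib (hFY u) (hFY w)]
  have hNzero : (∑ᶠ i : ℤ, (YT i) (0 : V)) = 0 := by
    rw [finsum_congr (fun i : ℤ => (YT i).map_zero), finsum_zero]
  have hswap : (∑ᶠ j : ℤ, ∑ᶠ i : ℤ, (YT i) ((XT j) v))
      = ∑ᶠ i : ℤ, (YT i) (∑ᶠ j : ℤ, (XT j) v) := by
    let L : V →+ V :=
      { toFun := fun w => ∑ᶠ i : ℤ, (YT i) w, map_zero' := hNzero, map_add' := hNadd }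
    have hLs : ∀ w : V, L w = ∑ᶠ i : ℤ, (YT i) w := fun w => rfl
    have hml := L.map_finsum (f := fun j => (XT j) v) (hFX v)
    simp only [hLs] at hml
    exact hml.symm
  -- the indicator sum
  have hchi : (∑ᶠ j : ℤ,
      ((if 0 ≤ j ∧ m + n = 0 then v else 0) - (if m ≤ j ∧ m + n = 0 then v else 0)))
      = (if m = -n then (m:ℂ) else 0) • v := by
    by_cases hmn : m + n = 0
    · have hj : ∀ j : ℤ,
          ((if 0 ≤ j ∧ m + n = 0 then v else 0) - (if m ≤ j ∧ m + n = 0 then v else 0))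
          = ((if 0 ≤ j then (1:ℂ) else 0) - (if m ≤ j then 1 else 0)) • v := by
        intro j
        by_cases h1 : 0 ≤ j <;> by_cases h2 : m ≤ j <;>
          simp [h1, h2, hmn, sub_smul]
      rw [finsum_congr hj, ← finsum_smul' (aux_ind_fin m) v, aux_ind m,
        if_pos (by omega : m = -n)]
    · have hj : ∀ j : ℤ,
          ((if 0 ≤ j ∧ m + n = 0 then v else 0) - (if m ≤ j ∧ m + n = 0 then v else 0)) = 0 := by
        intro j
        rw [if_neg (fun h => hmn h.2), if_neg (fun h => hmn h.2), sub_self]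
      rw [finsum_congr hj, finsum_zero, if_neg (by omega : ¬ m = -n), zero_smul]
  have hfTT : (support fun j : ℤ => (Tab j) v + (Tdc (m - j - 1)) v).Finite := by
    apply (hFab.union hfdc').subset
    rw [support_subset_iff]
    intro j hj
    by_contra hc
    simp only [Set.mem_union, mem_support, not_or, not_not] at hc
    exact hj (by rw [hc.1, hc.2, add_zero])
  have hre : (∑ᶠ j : ℤ, (Tdc (m - j - 1)) v) = ∑ᶠ i : ℤ, (Tdc i) v := by
    have := finsum_comp_equiv
      (⟨fun j => m - j - 1, fun j => m - j - 1,
        fun j => by show m - (m - j - 1) - 1 = j; omega,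
        fun j => by show m - (m - j - 1) - 1 = j; omega⟩ : ℤ ≃ ℤ)
      (f := fun i : ℤ => (Tdc i) v)
    simpa [Equiv.coe_fn_mk] using this
  -- assemble
  calc (∑ᶠ j : ℤ, (XT j) (∑ᶠ i : ℤ, (YT i) v)) - (∑ᶠ i : ℤ, (YT i) (∑ᶠ j : ℤ, (XT j) v))
      = ((∑ᶠ j : ℤ, ((∑ᶠ i : ℤ, (YT i) ((XT j) v))
          + ((A j) ((Bo (m + n - j - 1)) v) - (C (j + n)) ((D (m - j - 1)) v)))))
        - (∑ᶠ i : ℤ, (YT i) (∑ᶠ j : ℤ, (XT j) v)) := by rw [finsum_congr hstep]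
    _ = ∑ᶠ j : ℤ, ((A j) ((Bo (m + n - j - 1)) v) - (C (j + n)) ((D (m - j - 1)) v)) := by
          rw [finsum_add_distrib hfN hfPQ, hswap]; abel
    _ = ∑ᶠ j : ℤ, ((Tab j) v + (Tdc (m - j - 1)) v
          + ((if 0 ≤ j ∧ m + n = 0 then v else 0) - (if m ≤ j ∧ m + n = 0 then v else 0))) := by
          rw [finsum_congr hPQ]
    _ = ((∑ᶠ j : ℤ, (Tab j) v) + ∑ᶠ j : ℤ, (Tdc (m - j - 1)) v)
          + ∑ᶠ j : ℤ, ((if 0 ≤ j ∧ m + n = 0 then v else 0)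
            - (if m ≤ j ∧ m + n = 0 then v else 0)) := by
          rw [finsum_add_distrib hfTT hfchi, finsum_add_distrib hFab hfdc']
    _ = ((∑ᶠ j : ℤ, (Tab j) v) + ∑ᶠ i : ℤ, (Tdc i) v) + (if m = -n then (m:ℂ) else 0) • v := by
          rw [hre, hchi]

theorem stmt19 (G V : Type*) [AddCommGroup V] [Module ℂ V]
    (B : G → G → ℂ) (φ : G → ℚ → Module.End ℂ V)
    (hCl : ∀ (x y : G) (k l : ℚ), HalfInt k → HalfInt l →
      φ x k * φ y l + φ y l * φ x k = (if k = -l then B x y else 0) • (1 : Module.End ℂ V))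
    (NO : G → G → ℚ → ℚ → Module.End ℂ V)
    (hNO : ∀ a b k l, NO a b k l = if k < 0 then φ a k * φ b l else -(φ b l * φ a k))
    (Nc : G → G → ℤ → V → V)
    (hNc : ∀ a b m v, Nc a b m v = ∑ᶠ j : ℤ, (NO a b ((j : ℚ) + 1 / 2) ((m : ℚ) - ((j : ℚ) + 1 / 2))) v)
    (hFin : ∀ (a b : G) (m : ℤ) (v : V),
      (Function.support fun j : ℤ =>
        (NO a b ((j : ℚ) + 1 / 2) ((m : ℚ) - ((j : ℚ) + 1 / 2))) v).Finite)
    -- the generators ε_n, ε*_n, ε_{n̄}, ε*_{n̄} and their pairings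
    (en enS enb enbS : G)
    (hsymm : ∀ x y : G, B x y = B y x)
    (h1 : B en enS = 1) (h2 : B enb enbS = 1)
    (h3 : B en en = 0) (h4 : B enS enS = 0) (h5 : B enb enb = 0) (h6 : B enbS enbS = 0)
    (h7 : B en enb = 0) (h8 : B en enbS = 0) (h9 : B enS enb = 0) (h10 : B enS enbS = 0) :
    -- [X(α_n,·)_m, X(−α_n,·)_n] = α_n(m+n) + m δ_{m,−n} id, where
    -- X(α_n,·) = :ε_n ε*_{n̄}:, X(−α_n,·) = :ε_{n̄} ε*_n:, α_n = :ε_n ε*_n: + :ε*_{n̄} ε_{n̄}: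
    ∀ (m n : ℤ) (v : V),
      Nc en enbS m (Nc enb enS n v) - Nc enb enS n (Nc en enbS m v) =
        (Nc en enS (m + n) v + Nc enbS enb (m + n) v)
          + (if m = -n then (m : ℂ) else 0) • v := by
  intro m n v
  have h9' : B enb enS = 0 := by rw [hsymm]; exact h9
  have h2' : B enbS enb = 1 := by rw [hsymm]; exact h2
  have h10' : B enbS enS = 0 := by rw [hsymm]; exact h10
  have harg : ∀ a b : ℤ, ((a:ℚ) - ((b:ℚ) + 1/2)) = (((a - b - 1 : ℤ) : ℚ) + 1/2) := by
    intro a b; push_cast; ring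
  have hneg : ∀ j : ℤ, (((j:ℚ) + 1/2) < 0) ↔ (j < 0) := by
    intro j
    constructor
    · intro h
      by_contra hc
      push_neg at hc
      have h0 : (0:ℚ) ≤ (j:ℚ) := by exact_mod_cast hc
      linarith
    · intro h
      have h1 : j ≤ -1 := by omega
      have h0 : (j:ℚ) ≤ -1 := by exact_mod_cast h1
      linarith
  have hcond : ∀ r s : ℤ, (((r:ℚ) + 1/2) = -((s:ℚ) + 1/2)) ↔ (r + s = -1) := by
    intro r s
    constructor
    · intro h
      have h2c : ((r + s : ℤ) : ℚ) = ((-1 : ℤ) : ℚ) := by push_cast; linarith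
      exact_mod_cast h2c
    · intro h
      have h1c : ((r + s : ℤ) : ℚ) = ((-1 : ℤ) : ℚ) :=
        congrArg (fun z : ℤ => (z:ℚ)) h
      push_cast at h1c
      linarith
  have hCl' : ∀ (x y : G) (r s : ℤ),
      φ x ((r:ℚ) + 1/2) * φ y ((s:ℚ) + 1/2) + φ y ((s:ℚ) + 1/2) * φ x ((r:ℚ) + 1/2)
      = (if r + s = -1 then B x y else 0) • 1 := by
    intro x y r s
    have h := hCl x y ((r:ℚ) + 1/2) ((s:ℚ) + 1/2) ⟨r, rfl⟩ ⟨s, rfl⟩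
    simpa only [hcond r s] using h
  have hXj : ∀ j : ℤ, NO en enbS ((j:ℚ) + 1/2) ((m:ℚ) - ((j:ℚ) + 1/2))
      = φ en ((j:ℚ) + 1/2) * φ enbS (((m - j - 1 : ℤ):ℚ) + 1/2) := by
    intro j
    rw [hNO, harg m j]
    split_ifs with h
    · rfl
    · have hac := hCl' en enbS j (m - j - 1)
      rw [h8] at hac
      simp only [ite_self, zero_smul] at hac
      exact (eq_neg_of_add_eq_zero_left hac).symm
  have hYi : ∀ i : ℤ, NO enb enS ((i:ℚ) + 1/2) ((n:ℚ) - ((i:ℚ) + 1/2))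
      = φ enb ((i:ℚ) + 1/2) * φ enS (((n - i - 1 : ℤ):ℚ) + 1/2) := by
    intro i
    rw [hNO, harg n i]
    split_ifs with h
    · rfl
    · have hac := hCl' enb enS i (n - i - 1)
      rw [h9'] at hac
      simp only [ite_self, zero_smul] at hac
      exact (eq_neg_of_add_eq_zero_left hac).symm
  have hTabj : ∀ j : ℤ, NO en enS ((j:ℚ) + 1/2) (((m + n : ℤ):ℚ) - ((j:ℚ) + 1/2))
      = if j < 0 then φ en ((j:ℚ) + 1/2) * φ enS (((m + n - j - 1 : ℤ):ℚ) + 1/2)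
        else -(φ enS (((m + n - j - 1 : ℤ):ℚ) + 1/2) * φ en ((j:ℚ) + 1/2)) := by
    intro j
    rw [hNO, harg (m + n) j]
    simp only [hneg j]
  have hTdci : ∀ i : ℤ, NO enbS enb ((i:ℚ) + 1/2) (((m + n : ℤ):ℚ) - ((i:ℚ) + 1/2))
      = if i < 0 then φ enbS ((i:ℚ) + 1/2) * φ enb (((m + n - i - 1 : ℤ):ℚ) + 1/2)
        else -(φ enb (((m + n - i - 1 : ℤ):ℚ) + 1/2) * φ enbS ((i:ℚ) + 1/2)) := by
    intro i
    rw [hNO, harg (m + n) i]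
    simp only [hneg i]
  simp only [hNc, hXj, hYi, hTabj, hTdci]
  refine main_aux (fun r : ℤ => φ en ((r:ℚ) + 1/2)) (fun r : ℤ => φ enS ((r:ℚ) + 1/2))
    (fun r : ℤ => φ enb ((r:ℚ) + 1/2)) (fun r : ℤ => φ enbS ((r:ℚ) + 1/2)) m n v
    ?_ ?_ ?_ ?_ ?_ ?_ ?_ ?_ ?_ ?_
  · intro r s
    have h := hCl' en enS r s
    rw [h1] at h
    exact h
  · intro r s
    have h := hCl' enbS enb r s
    rw [h2'] at h
    exact h
  · intro r s
    have h := hCl' en enbS r s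
    rw [h8] at h
    simpa only [ite_self, zero_smul] using h
  · intro r s
    have h := hCl' en enb r s
    rw [h7] at h
    simpa only [ite_self, zero_smul] using h
  · intro r s
    have h := hCl' enS enb r s
    rw [h9] at h
    simpa only [ite_self, zero_smul] using h
  · intro r s
    have h := hCl' enS enbS r s
    rw [h10] at h
    simpa only [ite_self, zero_smul] using h
  · intro w
    have hX : (fun j : ℤ => (NO en enbS ((j:ℚ) + 1/2) ((m:ℚ) - ((j:ℚ) + 1/2))) w)
        = fun j : ℤ => (φ en ((j:ℚ) + 1/2) * φ enbS (((m - j - 1 : ℤ):ℚ) + 1/2)) w :=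
      funext fun j => by rw [hXj j]
    exact hX ▸ hFin en enbS m w
  · intro w
    have hY : (fun i : ℤ => (NO enb enS ((i:ℚ) + 1/2) ((n:ℚ) - ((i:ℚ) + 1/2))) w)
        = fun i : ℤ => (φ enb ((i:ℚ) + 1/2) * φ enS (((n - i - 1 : ℤ):ℚ) + 1/2)) w :=
      funext fun i => by rw [hYi i]
    exact hY ▸ hFin enb enS n w
  · have hT : (fun j : ℤ => (NO en enS ((j:ℚ) + 1/2) (((m + n : ℤ):ℚ) - ((j:ℚ) + 1/2))) v)
        = fun j : ℤ => ((if j < 0 then φ en ((j:ℚ) + 1/2) * φ enS (((m + n - j - 1 : ℤ):ℚ) + 1/2)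
          else -(φ enS (((m + n - j - 1 : ℤ):ℚ) + 1/2) * φ en ((j:ℚ) + 1/2)))) v :=
      funext fun j => by rw [hTabj j]
    exact hT ▸ hFin en enS (m + n) v
  · have hT : (fun i : ℤ => (NO enbS enb ((i:ℚ) + 1/2) (((m + n : ℤ):ℚ) - ((i:ℚ) + 1/2))) v)
        = fun i : ℤ => ((if i < 0 then φ enbS ((i:ℚ) + 1/2) * φ enb (((m + n - i - 1 : ℤ):ℚ) + 1/2)
          else -(φ enb (((m + n - i - 1 : ℤ):ℚ) + 1/2) * φ enbS ((i:ℚ) + 1/2)))) v :=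
      funext fun i => by rw [hTdci i]
    exact hT ▸ hFin enbS enb (m + n) v
end
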